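/- Let $q \geq 2$ be a prime power, $k \geq 1$, and $n \geq 3k+4$. Then $\left(D(k,q)\frac{q^{n-k-1}-1}{q^{2k+2}-1}+1\right)\frac{q^{n+1}-1}{q^{n}-1} < 2\left(\frac{q^{n-k}-1}{q^{k+1}-1}\right)+1$, where $D(k,q)=\frac{1}{\sqrt[8]{2}}q^{\frac{3k}{4}-\frac{k^2}{4}-\frac{1}{2}}(q-1)^{\frac{k^2}{4}-\frac{k}{4}+\frac{1}{2}}\sqrt{q^2+q+1}-1$. -/

import Mathlib

/-!
Bounding `2^(-1/8)` by `1` and `q - 1` by `q`, the exponents of `D(k,q) + 1` collapse to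
`q^(k/2) √(q²+q+1) = √(q^k (q²+q+1)) ≤ q^(k+1)`. With `D ≤ q^(k+1) - 1` and
`q^(2k+2) - 1 = (q^(k+1) - 1)(q^(k+1) + 1)`, the first factor of the left side is at most
`q^(n-2k-2)` and the second at most `q + 1`, while the right side is at least `2 q^(n-2k-1) + 1`.
-/

noncomputable def cameronLieblerD (k : ℕ) (q : ℝ) : ℝ :=
  (2 : ℝ) ^ (-(1 : ℝ) / 8) * q ^ ((3 * (k : ℝ)) / 4 - (k : ℝ) ^ 2 / 4 - 1 / 2) *
    (q - 1) ^ ((k : ℝ) ^ 2 / 4 - (k : ℝ) / 4 + 1 / 2) * Real.sqrt (q ^ 2 + q + 1) - 1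

lemma rpow_mul_rpow_le_rpow_add {x y : ℝ} (d : ℝ) {e : ℝ} (hx : 0 < x) (hy : 0 ≤ y)
    (hyx : y ≤ x) (he : 0 ≤ e) : x ^ d * y ^ e ≤ x ^ (d + e) := by
  rw [Real.rpow_add hx]
  gcongr

lemma rpow_half_mul_sqrt_le_pow {q : ℝ} {k : ℕ} (hq : 2 ≤ q) (hk : 1 ≤ k) :
    q ^ ((k : ℝ) / 2) * Real.sqrt (q ^ 2 + q + 1) ≤ q ^ (k + 1) := by
  have hq0 : 0 ≤ q := by linarith
  have hcube : q ^ 2 + q + 1 ≤ q ^ (k + 2) :=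
    calc q ^ 2 + q + 1 ≤ q ^ 3 := by nlinarith
      _ ≤ q ^ (k + 2) := pow_le_pow_right₀ (by linarith) (by omega)
  rw [Real.rpow_div_two_eq_sqrt _ hq0, Real.rpow_natCast]
  refine le_of_pow_le_pow_left₀ two_ne_zero (by positivity) ?_
  calc (√q ^ k * √(q ^ 2 + q + 1)) ^ 2 = q ^ k * (q ^ 2 + q + 1) := by
        rw [mul_pow, ← pow_mul, mul_comm k, pow_mul, Real.sq_sqrt hq0,
          Real.sq_sqrt (by positivity)]
    _ ≤ q ^ k * q ^ (k + 2) := by gcongr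
    _ = (q ^ (k + 1)) ^ 2 := by ring

lemma cameronLieblerD_le {q : ℝ} {k : ℕ} (hq : 2 ≤ q) (hk : 1 ≤ k) :
    cameronLieblerD k q ≤ q ^ (k + 1) - 1 := by
  have hexp : 0 ≤ (k : ℝ) ^ 2 / 4 - (k : ℝ) / 4 + 1 / 2 := by
    nlinarith [sq_nonneg ((k : ℝ) - 1 / 2)]
  have hpow := rpow_mul_rpow_le_rpow_add ((3 * (k : ℝ)) / 4 - (k : ℝ) ^ 2 / 4 - 1 / 2)
    (by linarith : 0 < q) (by linarith : 0 ≤ q - 1) (by linarith) hexp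
  rw [show (3 * (k : ℝ)) / 4 - (k : ℝ) ^ 2 / 4 - 1 / 2 +
    ((k : ℝ) ^ 2 / 4 - (k : ℝ) / 4 + 1 / 2) = (k : ℝ) / 2 by ring] at hpow
  have hcoeff : (2 : ℝ) ^ (-(1 : ℝ) / 8) ≤ 1 :=
    Real.rpow_le_one_of_one_le_of_nonpos one_le_two (by norm_num)
  have hprod : (2 : ℝ) ^ (-(1 : ℝ) / 8) *
      (q ^ ((3 * (k : ℝ)) / 4 - (k : ℝ) ^ 2 / 4 - 1 / 2) *
        (q - 1) ^ ((k : ℝ) ^ 2 / 4 - (k : ℝ) / 4 + 1 / 2)) ≤ q ^ ((k : ℝ) / 2) := by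
    simpa using mul_le_mul hcoeff hpow
      (mul_nonneg (Real.rpow_nonneg (by linarith) _) (Real.rpow_nonneg (by linarith) _))
      zero_le_one
  have hscaled := mul_le_mul_of_nonneg_right hprod (Real.sqrt_nonneg (q ^ 2 + q + 1))
  have hroot := rpow_half_mul_sqrt_le_pow hq hk
  unfold cameronLieblerD
  rw [mul_assoc _ (q ^ _)]
  linarith

section GeometricRatios

variable {x : ℝ}

lemma pow_sub_one_div_pow_sub_one_nonneg (hx : 1 ≤ x) (a b : ℕ) :
    0 ≤ (x ^ a - 1) / (x ^ b - 1) :=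
  div_nonneg (sub_nonneg.2 (one_le_pow₀ hx)) (sub_nonneg.2 (one_le_pow₀ hx))

lemma pow_succ_sub_one_div_pow_sub_one_le (hx : 1 < x) {m : ℕ} (hm : m ≠ 0) :
    (x ^ (m + 1) - 1) / (x ^ m - 1) ≤ x + 1 := by
  rw [div_le_iff₀ (sub_pos.2 (one_lt_pow₀ hx hm)), pow_succ]
  nlinarith [le_self_pow₀ hx.le hm]

lemma pow_le_pow_add_sub_one_div_pow_sub_one (hx : 1 < x) (a : ℕ) {b : ℕ} (hb : b ≠ 0) :
    x ^ a ≤ (x ^ (a + b) - 1) / (x ^ b - 1) := by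
  rw [le_div_iff₀ (sub_pos.2 (one_lt_pow₀ hx hb)), pow_add]
  nlinarith [one_le_pow₀ (n := a) hx.le]

lemma pow_sub_one_mul_div_add_one_le (hx : 1 < x) {i j : ℕ} (hj : j ≠ 0) (hji : j ≤ i) :
    (x ^ j - 1) * ((x ^ (i + j) - 1) / (x ^ (2 * j) - 1)) + 1 ≤ x ^ i := by
  have ha : 1 < x ^ j := one_lt_pow₀ hx hj
  have hP : x ^ j ≤ x ^ i := pow_le_pow_right₀ hx.le hji
  have hsplit : (x ^ j - 1) * ((x ^ (i + j) - 1) / (x ^ (2 * j) - 1)) + 1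
      = (x ^ i * x ^ j + x ^ j) / (x ^ j + 1) := by
    have ha1 : x ^ j - 1 ≠ 0 := by linarith
    rw [pow_add, pow_mul', show (x ^ j) ^ 2 - 1 = (x ^ j - 1) * (x ^ j + 1) by ring]
    field_simp
    ring
  rw [hsplit, div_le_iff₀ (by positivity)]
  nlinarith

end GeometricRatios

theorem projective_bound_below_affine_bound_general
    (q k n : ℕ) (hq : 2 ≤ q) (hk : 1 ≤ k) (hn : 3 * k + 4 ≤ n) :
    (((2 : ℝ) ^ (-(1 : ℝ) / 8) *
        (q : ℝ) ^ ((3 * (k : ℝ)) / 4 - (k : ℝ) ^ 2 / 4 - 1 / 2) *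
        ((q : ℝ) - 1) ^ ((k : ℝ) ^ 2 / 4 - (k : ℝ) / 4 + 1 / 2) *
        Real.sqrt ((q : ℝ) ^ 2 + (q : ℝ) + 1) - 1) *
        (((q : ℝ) ^ (n - k - 1) - 1) / ((q : ℝ) ^ (2 * k + 2) - 1)) + 1) *
      (((q : ℝ) ^ (n + 1) - 1) / ((q : ℝ) ^ n - 1)) <
    2 * (((q : ℝ) ^ (n - k) - 1) / ((q : ℝ) ^ (k + 1) - 1)) + 1 := by
  obtain ⟨i, hi, rfl⟩ : ∃ i, k + 1 ≤ i ∧ n = i + 2 * (k + 1) :=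
    ⟨n - 2 * (k + 1), by omega, by omega⟩
  rw [show i + 2 * (k + 1) - k - 1 = i + (k + 1) by omega,
    show i + 2 * (k + 1) - k = i + 1 + (k + 1) by omega, show 2 * k + 2 = 2 * (k + 1) by ring]
  have hQ : (2 : ℝ) ≤ q := by exact_mod_cast hq
  have hQ1 : (1 : ℝ) < q := by linarith
  have hDX : cameronLieblerD k q *
      (((q : ℝ) ^ (i + (k + 1)) - 1) / ((q : ℝ) ^ (2 * (k + 1)) - 1)) + 1 ≤
        (q : ℝ) ^ i := by
    have hD := mul_le_mul_of_nonneg_right (cameronLieblerD_le hQ hk)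
      (pow_sub_one_div_pow_sub_one_nonneg hQ1.le (i + (k + 1)) (2 * (k + 1)))
    linarith [pow_sub_one_mul_div_add_one_le hQ1 k.add_one_ne_zero hi]
  calc _ ≤ (q : ℝ) ^ i *
        (((q : ℝ) ^ (i + 2 * (k + 1) + 1) - 1) / ((q : ℝ) ^ (i + 2 * (k + 1)) - 1)) :=
        mul_le_mul_of_nonneg_right hDX (pow_sub_one_div_pow_sub_one_nonneg hQ1.le _ _)
    _ ≤ (q : ℝ) ^ i * (q + 1) := mul_le_mul_of_nonneg_left
        (pow_succ_sub_one_div_pow_sub_one_le hQ1 (by omega)) (by positivity)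
    _ < 2 * (q : ℝ) ^ (i + 1) + 1 := by
        rw [pow_succ]
        nlinarith [one_le_pow₀ (n := i) hQ1.le]
    _ ≤ _ := by
        linarith [pow_le_pow_add_sub_one_div_pow_sub_one hQ1 (i + 1) k.add_one_ne_zero]

/-- For a prime power `q ≥ 2`, `k ≥ 1` and `n ≥ 3k+4`:
`(D(k,q) * (q^(n-k-1)-1)/(q^(2k+2)-1) + 1) * (q^(n+1)-1)/(q^n-1) < 2 (q^(n-k)-1)/(q^(k+1)-1) + 1`,
where `D(k,q) = 2^(-1/8) q^(3k/4 - k²/4 - 1/2) (q-1)^(k²/4 - k/4 + 1/2) √(q²+q+1) - 1`. -/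
theorem projective_bound_below_affine_bound
    (q k n : ℕ) (hq : 2 ≤ q) (hpp : IsPrimePow q) (hk : 1 ≤ k) (hn : 3 * k + 4 ≤ n) :
    (((2 : ℝ) ^ (-(1 : ℝ) / 8) *
        (q : ℝ) ^ ((3 * (k : ℝ)) / 4 - (k : ℝ) ^ 2 / 4 - 1 / 2) *
        ((q : ℝ) - 1) ^ ((k : ℝ) ^ 2 / 4 - (k : ℝ) / 4 + 1 / 2) *
        Real.sqrt ((q : ℝ) ^ 2 + (q : ℝ) + 1) - 1) *
        (((q : ℝ) ^ (n - k - 1) - 1) / ((q : ℝ) ^ (2 * k + 2) - 1)) + 1) *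
      (((q : ℝ) ^ (n + 1) - 1) / ((q : ℝ) ^ n - 1)) <
    2 * (((q : ℝ) ^ (n - k) - 1) / ((q : ℝ) ^ (k + 1) - 1)) + 1 :=
  projective_bound_below_affine_bound_general q k n hq hk hn
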